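/- Let δ ∈ (0,1), let φ: ℝ^d → ℝ be a C^{1+δ} function and h: ℝ^d → ℂ a compactly supported C^δ function such that ∑_{j=1}^d (∂_j φ(w))^2 ≠ 0 for all w in the support of h, and define h_k^φ(w) = i·∂_k φ(w)·h(w) / ∑_{j=1}^d (∂_j φ(w))^2 for k = 1, …, d. Let v: ℝ^d → ℝ_{≥0} be a C^∞ function supported in the unit ball with ∫ v(x) dx = 1, set v_ε(x) = ε^{−d}·v(x/ε) and h_{k,ε}^φ = h_k^φ * v_ε for ε > 0. Then for every real L ≥ 1 and every small enough ε > 0: ∫_{ℝ^d} e^{iLφ(w)}·h(w) dw = ∫_{ℝ^d} (e^{iLφ(w)}/L)·∑_{k=1}^d ∂_k h_{k,ε}^φ(w) dw − ∑_{k=1}^d ∫_{ℝ^d} i·∂_k φ(w)·e^{iLφ(w)}·(h_k^φ(w) − h_{k,ε}^φ(w)) dw. -/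

import Mathlib

open MeasureTheory Filter Set
open scoped ENNReal Topology

noncomputable section

abbrev Euc (d : ℕ) := EuclideanSpace ℝ (Fin d)

/-- the partial derivative ∂_k of a function on ℝ^d. -/
def pderivK {d : ℕ} {F : Type*} [NormedAddCommGroup F] [NormedSpace ℝ F]
    (k : Fin d) (f : Euc d → F) (w : Euc d) : F :=
  fderiv ℝ f w (EuclideanSpace.single k 1)

/-- convolution of a complex function with a real kernel on ℝ^d. -/
def convC {d : ℕ} (u : Euc d → ℂ) (w : Euc d → ℝ) : Euc d → ℂ :=
  fun x => ∫ y, u y * (w (x - y) : ℂ)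

lemma pderivK_cont {d : ℕ} {φ : Euc d → ℝ} (hφ : ContDiff ℝ 1 φ) (k : Fin d) :
    Continuous (fun w => pderivK k φ w) :=
  (hφ.continuous_fderiv one_ne_zero).clm_apply continuous_const

-- test: convC as mathlib convolution
lemma convC_eq {d : ℕ} (u : Euc d → ℂ) (w : Euc d → ℝ) :
    convC u w = MeasureTheory.convolution w u (ContinuousLinearMap.lsmul ℝ ℝ) volume := by
  funext x
  unfold convC MeasureTheory.convolution
  rw [← integral_sub_left_eq_self (fun y => u y * ((w (x - y) : ℝ) : ℂ)) volume x]
  refine integral_congr_ae (Filter.Eventually.of_forall fun t => ?_)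
  simp [sub_sub_cancel, Complex.real_smul, mul_comm]

lemma conv_props {d : ℕ} {u : Euc d → ℂ} (hu : Continuous u) (huc : HasCompactSupport u)
    {w : Euc d → ℝ} (hw : ContDiff ℝ (⊤ : ℕ∞) w) (hwc : HasCompactSupport w) :
    ContDiff ℝ 1 (convC u w) ∧ HasCompactSupport (convC u w) := by
  rw [convC_eq]
  constructor
  · have := hwc.contDiff_convolution_left (ContinuousLinearMap.lsmul ℝ ℝ)
      (μ := volume) (n := 1) (hw.of_le (by simp)) (hu.locallyIntegrable)
    exact_mod_cast this
  · exact hwc.convolution (ContinuousLinearMap.lsmul ℝ ℝ) huc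

lemma g_props {d : ℕ} {φ : Euc d → ℝ} {h : Euc d → ℂ} (hφ : ContDiff ℝ 1 φ)
    (hhc : HasCompactSupport h) (hhcont : Continuous h)
    (hnz : ∀ w ∈ tsupport h, ∑ j : Fin d, (pderivK j φ w) ^ 2 ≠ 0) (k : Fin d) :
    Continuous (fun w' : Euc d => Complex.I * Complex.ofReal (pderivK k φ w') * h w' /
        Complex.ofReal (∑ j : Fin d, (pderivK j φ w') ^ 2)) ∧
    HasCompactSupport (fun w' : Euc d => Complex.I * Complex.ofReal (pderivK k φ w') * h w' /
        Complex.ofReal (∑ j : Fin d, (pderivK j φ w') ^ 2)) := by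
  have hS : Continuous (fun w : Euc d => ∑ j : Fin d, (pderivK j φ w) ^ 2) :=
    continuous_finset_sum _ fun j _ => (pderivK_cont hφ j).pow 2
  constructor
  · rw [continuous_iff_continuousAt]
    intro x
    by_cases hx : (∑ j : Fin d, (pderivK j φ x) ^ 2) = 0
    · have hxs : x ∉ tsupport h := fun hmem => hnz x hmem hx
      have hev : ∀ᶠ y in 𝓝 x, h y = 0 := by
        filter_upwards [(isClosed_tsupport h).isOpen_compl.mem_nhds hxs] with y hy
        exact image_eq_zero_of_notMem_tsupport hy
      refine (continuousAt_const (y := (0:ℂ))).congr ?_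
      filter_upwards [hev] with y hy
      simp [hy]
    · refine ContinuousAt.div ?_ ?_ ?_
      · exact ((continuous_const.mul ((Complex.continuous_ofReal).comp
          (pderivK_cont hφ k))).mul hhcont).continuousAt
      · exact ((Complex.continuous_ofReal).comp hS).continuousAt
      · exact Complex.ofReal_ne_zero.mpr hx
  · refine hhc.mono fun x hx => ?_
    simp only [Function.mem_support] at hx ⊢
    intro hzero
    exact hx (by simp [hzero])

lemma moll_props {d : ℕ} {v : Euc d → ℝ} (hv : ContDiff ℝ (⊤ : ℕ∞) v)
    (hvsupp : tsupport v ⊆ Metric.closedBall 0 1) {ε : ℝ} (hε : 0 < ε) :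
    ContDiff ℝ (⊤ : ℕ∞) (fun x : Euc d => ε ^ (-(d:ℝ)) * v (ε⁻¹ • x)) ∧
    HasCompactSupport (fun x : Euc d => ε ^ (-(d:ℝ)) * v (ε⁻¹ • x)) := by
  constructor
  · exact contDiff_const.mul (hv.comp (contDiff_id.const_smul ε⁻¹))
  · have h1 : HasCompactSupport v :=
      IsCompact.of_isClosed_subset (isCompact_closedBall 0 1) (isClosed_tsupport v) hvsupp
    have h2 : HasCompactSupport (fun x : Euc d => v (ε⁻¹ • x)) :=
      h1.comp_homeomorph (Homeomorph.smulOfNeZero ε⁻¹ (inv_ne_zero hε.ne'))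
    exact h2.mul_left

lemma aux_main {d : ℕ} {φ : Euc d → ℝ} {h : Euc d → ℂ} (hφ : ContDiff ℝ 1 φ)
    (hhc : HasCompactSupport h) (hhcont : Continuous h)
    (hnz : ∀ w ∈ tsupport h, ∑ j : Fin d, (pderivK j φ w) ^ 2 ≠ 0)
    {L : ℝ} (hL : 1 ≤ L)
    (E : Euc d → ℂ) (hE : ∀ w, E w = Complex.exp (Complex.I * (L * φ w)))
    (g F : Fin d → Euc d → ℂ)
    (hg : ∀ k, g k = fun w' : Euc d => Complex.I * Complex.ofReal (pderivK k φ w') * h w' /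
        Complex.ofReal (∑ j : Fin d, (pderivK j φ w') ^ 2))
    (hgcont : ∀ k, Continuous (g k)) (hgc : ∀ k, HasCompactSupport (g k))
    (hF1 : ∀ k, ContDiff ℝ 1 (F k)) (hFc : ∀ k, HasCompactSupport (F k)) :
    (∫ w : Euc d, E w * h w) =
      (∫ w : Euc d, (E w / (L : ℂ)) * ∑ k : Fin d, pderivK k (F k) w)
      - ∑ k : Fin d, ∫ w : Euc d,
          Complex.I * Complex.ofReal (pderivK k φ w) * E w * (g k w - F k w) := by
  have hL0 : (L : ℂ) ≠ 0 := Complex.ofReal_ne_zero.mpr (by linarith)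
  have hEfun : E = fun w => Complex.exp (Complex.I * (L * φ w)) := funext hE
  -- E is C¹
  have hEC1 : ContDiff ℝ 1 E := by
    rw [hEfun]
    exact Complex.contDiff_exp.comp
      (contDiff_const.mul (contDiff_const.mul (Complex.ofRealCLM.contDiff.comp hφ)))
  have hEcont : Continuous E := hEC1.continuous
  -- derivative of E
  have hEd : ∀ w, HasFDerivAt E
      (E w • ((Complex.I * L) • (Complex.ofRealCLM.comp (fderiv ℝ φ w)))) w := by
    intro w
    rw [hEfun]
    have h1 : HasFDerivAt (fun w : Euc d => (φ w : ℂ))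
        (Complex.ofRealCLM.comp (fderiv ℝ φ w)) w :=
      (Complex.ofRealCLM.hasFDerivAt).comp w (hφ.differentiable one_ne_zero w).hasFDerivAt
    have h2 := ((h1.const_mul (L : ℂ)).const_mul Complex.I).cexp
    simpa [smul_smul] using h2
  have hEdiff : Differentiable ℝ E := fun w => (hEd w).differentiableAt
  have hEk : ∀ (k : Fin d) (w : Euc d), pderivK k E w
      = Complex.I * (L : ℂ) * Complex.ofReal (pderivK k φ w) * E w := by
    intro k w
    simp only [pderivK]
    rw [(hEd w).fderiv]
    simp only [ContinuousLinearMap.smul_apply, ContinuousLinearMap.comp_apply,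
      Complex.ofRealCLM_apply, smul_eq_mul]
    ring
  have hDEcont : ∀ k : Fin d, Continuous (fun w => pderivK k E w) := by
    intro k
    have : (fun w => pderivK k E w)
        = fun w => Complex.I * (L : ℂ) * Complex.ofReal (pderivK k φ w) * E w := funext (hEk k)
    rw [this]
    exact (continuous_const.mul (Complex.continuous_ofReal.comp (pderivK_cont hφ k))).mul hEcont
  have hFcont : ∀ k, Continuous (F k) := fun k => (hF1 k).continuous
  have hDFcont : ∀ k : Fin d, Continuous (fun w => pderivK k (F k) w) := fun k =>
    ((hF1 k).continuous_fderiv one_ne_zero).clm_apply continuous_const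
  have hDFc : ∀ k : Fin d, HasCompactSupport (fun w => pderivK k (F k) w) := fun k =>
    (hFc k).fderiv_apply ℝ (EuclideanSpace.single k 1)
  -- integrability
  have hint1 : ∀ k : Fin d, Integrable
      (fun w => Complex.I * Complex.ofReal (pderivK k φ w) * E w * g k w) := fun k =>
    (((continuous_const.mul (Complex.continuous_ofReal.comp (pderivK_cont hφ k))).mul
      hEcont).mul (hgcont k)).integrable_of_hasCompactSupport ((hgc k).mul_left)
  have hint2 : ∀ k : Fin d, Integrable
      (fun w => Complex.I * Complex.ofReal (pderivK k φ w) * E w * F k w) := fun k =>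
    (((continuous_const.mul (Complex.continuous_ofReal.comp (pderivK_cont hφ k))).mul
      hEcont).mul (hFcont k)).integrable_of_hasCompactSupport ((hFc k).mul_left)
  have hint3 : ∀ k : Fin d, Integrable (fun w => E w * pderivK k (F k) w) := fun k =>
    (hEcont.mul (hDFcont k)).integrable_of_hasCompactSupport ((hDFc k).mul_left)
  have hint4 : ∀ k : Fin d, Integrable (fun w => pderivK k E w * F k w) := fun k =>
    ((hDEcont k).mul (hFcont k)).integrable_of_hasCompactSupport ((hFc k).mul_left)
  have hint5 : ∀ k : Fin d, Integrable (fun w => E w * F k w) := fun k =>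
    (hEcont.mul (hFcont k)).integrable_of_hasCompactSupport ((hFc k).mul_left)
  have hint6 : ∀ k : Fin d, Integrable (fun w => (E w / (L : ℂ)) * pderivK k (F k) w) := fun k =>
    ((hEcont.div_const _).mul (hDFcont k)).integrable_of_hasCompactSupport ((hDFc k).mul_left)
  -- integration by parts
  have hibp : ∀ k : Fin d, (∫ w, E w * pderivK k (F k) w) = - ∫ w, pderivK k E w * F k w :=
    fun k => integral_mul_fderiv_eq_neg_fderiv_mul_of_integrable (hint4 k) (hint3 k) (hint5 k)
      (fun x _ => hEdiff x) (fun x _ => (hF1 k).differentiable one_ne_zero x)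
  have hmain : ∀ k : Fin d, (∫ w, (E w / (L : ℂ)) * pderivK k (F k) w)
      = - ∫ w, Complex.I * Complex.ofReal (pderivK k φ w) * E w * F k w := by
    intro k
    have e1 : (∫ w, (E w / (L : ℂ)) * pderivK k (F k) w)
        = (L : ℂ)⁻¹ * ∫ w, E w * pderivK k (F k) w := by
      rw [← integral_const_mul]
      exact integral_congr_ae (Filter.Eventually.of_forall fun w => by ring)
    have e2 : (∫ w, pderivK k E w * F k w)
        = (L : ℂ) * ∫ w, Complex.I * Complex.ofReal (pderivK k φ w) * E w * F k w := by
      rw [← integral_const_mul]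
      refine integral_congr_ae (Filter.Eventually.of_forall fun w => ?_)
      show pderivK k E w * F k w
        = (L : ℂ) * (Complex.I * Complex.ofReal (pderivK k φ w) * E w * F k w)
      rw [hEk k w]; ring
    rw [e1, hibp k, e2, mul_neg, inv_mul_cancel_left₀ hL0]
  -- the key pointwise identity
  have hkey : ∀ w : Euc d, (∑ k : Fin d, Complex.I * Complex.ofReal (pderivK k φ w) * E w * g k w)
      = -(E w * h w) := by
    intro w
    by_cases hw : w ∈ tsupport h
    · have hSw := hnz w hw
      have hSc : (Complex.ofReal (∑ j : Fin d, (pderivK j φ w) ^ 2)) ≠ 0 :=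
        Complex.ofReal_ne_zero.mpr hSw
      have hterm : ∀ k : Fin d, Complex.I * Complex.ofReal (pderivK k φ w) * E w * g k w
          = (Complex.ofReal (pderivK k φ w)) ^ 2 *
            (-(E w * h w) / Complex.ofReal (∑ j : Fin d, (pderivK j φ w) ^ 2)) := by
        intro k
        simp only [hg]
        linear_combination (Complex.ofReal (pderivK k φ w) ^ 2 * E w * h w *
          (Complex.ofReal (∑ j : Fin d, (pderivK j φ w) ^ 2))⁻¹) * Complex.I_sq
      calc (∑ k : Fin d, Complex.I * Complex.ofReal (pderivK k φ w) * E w * g k w)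
          = ∑ k : Fin d, (Complex.ofReal (pderivK k φ w)) ^ 2 *
            (-(E w * h w) / Complex.ofReal (∑ j : Fin d, (pderivK j φ w) ^ 2)) :=
            Finset.sum_congr rfl fun k _ => hterm k
        _ = (∑ k : Fin d, (Complex.ofReal (pderivK k φ w)) ^ 2) *
            (-(E w * h w) / Complex.ofReal (∑ j : Fin d, (pderivK j φ w) ^ 2)) := by
            rw [Finset.sum_mul]
        _ = Complex.ofReal (∑ j : Fin d, (pderivK j φ w) ^ 2) *
            (-(E w * h w) / Complex.ofReal (∑ j : Fin d, (pderivK j φ w) ^ 2)) := by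
            push_cast; ring_nf
        _ = -(E w * h w) := by rw [mul_comm, div_mul_cancel₀ _ hSc]
    · have h0 : h w = 0 := image_eq_zero_of_notMem_tsupport hw
      simp [hg, h0]
  -- assembly
  have hA : (∫ w : Euc d, (E w / (L : ℂ)) * ∑ k : Fin d, pderivK k (F k) w)
      = ∑ k : Fin d, ∫ w, (E w / (L : ℂ)) * pderivK k (F k) w := by
    have hfun : (fun w : Euc d => (E w / (L : ℂ)) * ∑ k : Fin d, pderivK k (F k) w)
        = fun w => ∑ k : Fin d, (E w / (L : ℂ)) * pderivK k (F k) w := by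
      funext w; rw [Finset.mul_sum]
    rw [hfun]
    exact integral_finset_sum _ fun k _ => hint6 k
  have hB : ∀ k : Fin d, (∫ w : Euc d,
        Complex.I * Complex.ofReal (pderivK k φ w) * E w * (g k w - F k w))
      = (∫ w, Complex.I * Complex.ofReal (pderivK k φ w) * E w * g k w)
        - ∫ w, Complex.I * Complex.ofReal (pderivK k φ w) * E w * F k w := by
    intro k
    rw [← integral_sub (hint1 k) (hint2 k)]
    exact integral_congr_ae (Filter.Eventually.of_forall fun w => by ring)
  have hC : (∑ k : Fin d, ∫ w, Complex.I * Complex.ofReal (pderivK k φ w) * E w * g k w)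
      = - ∫ w, E w * h w :=
    calc (∑ k : Fin d, ∫ w, Complex.I * Complex.ofReal (pderivK k φ w) * E w * g k w)
        = ∫ w, ∑ k : Fin d, Complex.I * Complex.ofReal (pderivK k φ w) * E w * g k w :=
          (integral_finset_sum _ fun k _ => hint1 k).symm
      _ = ∫ w, -(E w * h w) := integral_congr_ae (Filter.Eventually.of_forall hkey)
      _ = - ∫ w, E w * h w := integral_neg _
  rw [hA, Finset.sum_congr rfl (fun k _ => hB k), Finset.sum_sub_distrib, hC,
    Finset.sum_congr rfl (fun k _ => hmain k), Finset.sum_neg_distrib]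
  ring

/-- regularised integration by parts: for every L ≥ 1 and small ε > 0,
∫ e^{iLφ} h = ∫ (e^{iLφ}/L)·∑_k ∂_k h^φ_{k,ε} − ∑_k ∫ i·∂_kφ·e^{iLφ}·(h^φ_k − h^φ_{k,ε}). -/
theorem regularised_integration_by_parts
    (d : ℕ) (δ : ℝ) (hδ : δ ∈ Set.Ioo (0:ℝ) 1)
    (φ : Euc d → ℝ) (h : Euc d → ℂ)
    -- φ is C^{1+δ}: continuously differentiable with δ-Hölder derivative on compacts
    (hφ : ContDiff ℝ 1 φ)
    (hφH : ∀ K : Set (Euc d), IsCompact K → ∃ C : ℝ, ∀ x ∈ K, ∀ y ∈ K,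
      ‖fderiv ℝ φ x - fderiv ℝ φ y‖ ≤ C * ‖x - y‖ ^ δ)
    -- h is a compactly supported C^δ function
    (hhc : HasCompactSupport h) (hhcont : Continuous h)
    (hhH : ∃ C : ℝ, ∀ x y, ‖h x - h y‖ ≤ C * ‖x - y‖ ^ δ)
    (hnz : ∀ w ∈ tsupport h, ∑ j : Fin d, (pderivK j φ w) ^ 2 ≠ 0)
    -- the mollifier v
    (v : Euc d → ℝ) (hv : ContDiff ℝ (⊤ : ℕ∞) v) (hv0 : ∀ x, 0 ≤ v x)
    (hvsupp : tsupport v ⊆ Metric.closedBall 0 1) (hv1 : ∫ x, v x = 1) :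
    -- h_k^φ
    ∀ L : ℝ, 1 ≤ L → ∃ ε₀ > (0:ℝ), ∀ ε : ℝ, 0 < ε → ε < ε₀ →
      (∫ w : Euc d, Complex.exp (Complex.I * (L * φ w)) * h w) =
        (∫ w : Euc d, (Complex.exp (Complex.I * (L * φ w)) / (L : ℂ)) *
          ∑ k : Fin d,
            pderivK k (convC (fun w' : Euc d =>
                Complex.I * Complex.ofReal (pderivK k φ w') * h w' /
                  Complex.ofReal (∑ j : Fin d, (pderivK j φ w') ^ 2))
              (fun x => ε ^ (-(d:ℝ)) * v (ε⁻¹ • x))) w)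
        - ∑ k : Fin d, ∫ w : Euc d,
            Complex.I * Complex.ofReal (pderivK k φ w) *
              Complex.exp (Complex.I * (L * φ w)) *
              ((Complex.I * Complex.ofReal (pderivK k φ w) * h w /
                  Complex.ofReal (∑ j : Fin d, (pderivK j φ w) ^ 2)) -
                convC (fun w' : Euc d =>
                    Complex.I * Complex.ofReal (pderivK k φ w') * h w' /
                      Complex.ofReal (∑ j : Fin d, (pderivK j φ w') ^ 2))
                  (fun x => ε ^ (-(d:ℝ)) * v (ε⁻¹ • x)) w) := by
  intro L hL
  refine ⟨1, one_pos, fun ε hε _ => ?_⟩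
  have hm := moll_props hv hvsupp hε
  have hgp := fun k : Fin d => g_props hφ hhc hhcont hnz k
  have hF1 : ∀ k : Fin d, ContDiff ℝ 1 (convC (fun w' : Euc d =>
      Complex.I * Complex.ofReal (pderivK k φ w') * h w' /
        Complex.ofReal (∑ j : Fin d, (pderivK j φ w') ^ 2))
      (fun x => ε ^ (-(d:ℝ)) * v (ε⁻¹ • x))) :=
    fun k => (conv_props (hgp k).1 (hgp k).2 hm.1 hm.2).1
  have hFc : ∀ k : Fin d, HasCompactSupport (convC (fun w' : Euc d =>
      Complex.I * Complex.ofReal (pderivK k φ w') * h w' /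
        Complex.ofReal (∑ j : Fin d, (pderivK j φ w') ^ 2))
      (fun x => ε ^ (-(d:ℝ)) * v (ε⁻¹ • x))) :=
    fun k => (conv_props (hgp k).1 (hgp k).2 hm.1 hm.2).2
  exact aux_main hφ hhc hhcont hnz hL
    (fun w => Complex.exp (Complex.I * (L * φ w))) (fun _ => rfl)
    (fun k w' => Complex.I * Complex.ofReal (pderivK k φ w') * h w' /
      Complex.ofReal (∑ j : Fin d, (pderivK j φ w') ^ 2))
    (fun k => convC (fun w' : Euc d =>
        Complex.I * Complex.ofReal (pderivK k φ w') * h w' /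
          Complex.ofReal (∑ j : Fin d, (pderivK j φ w') ^ 2))
      (fun x => ε ^ (-(d:ℝ)) * v (ε⁻¹ • x)))
    (fun _ => rfl) (fun k => (hgp k).1) (fun k => (hgp k).2) hF1 hFc

end
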